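/- Main convergence theorem (MGD): Let f_i : ℝ^d → ℝ (i = 1,...,T) be C² with ξ_i I ≤ ∇²f_i ≤ L_i I, 0 < ξ_i ≤ L_i, let L̄ = max_i L_i, and fix points w_i*. Suppose (m̄_{ij}^t) is row-stochastic with nonnegative entries for each t, σ > 0, and 0 < α < 2/(2σ + L̄). Then the iterates w_i^{t+1} = (1-ασ)w_i^t + ασ Σ_j m̄_{ij}^t w_j^t - α∇f_i(w_i^t) satisfy limsup_{t→∞} max_i ‖w_i^t - w_i*‖ ≤ (2ασ max_i ‖w_i*‖ + α max_i ‖∇f_i(w_i*)‖)/(1 - (γ̄ + ασ)), where γ̄ = max_i max{|1-ασ-αξ_i|, |1-ασ-αL_i|}. -/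

import Mathlib

/-!
The derivative of the gradient step `x ↦ (1 - ασ) • x - α • ∇f_i x` is the symmetric operator
`(1 - ασ) I - α ∇²f_i`, whose quadratic form lies between `1 - ασ - αL_i` and `1 - ασ - αξ_i`;
so its norm is at most `γ̄` and, by the mean value inequality, the step is `γ̄`-Lipschitz.
Averaging with a row-stochastic matrix does not increase the largest error, hence the maximal
error `e_t` satisfies `e_{t+1} ≤ (γ̄ + ασ) e_t + 2ασ max_i ‖w_i*‖ + α max_i ‖∇f_i(w_i*)‖`.
The step-size bound gives `γ̄ + ασ < 1`, and iterating this affine contraction bounds the limsup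
by its fixed point.
-/
open scoped RealInnerProductSpace

open Filter Finset InnerProductSpace

section Hessian

variable {E : Type*} [NormedAddCommGroup E] [InnerProductSpace ℝ E]

theorem ContinuousLinearMap.norm_le_max_abs_of_inner_self_mem {T : E →L[ℝ] E}
    (hT : (T : E →ₗ[ℝ] E).IsSymmetric) {a b : ℝ}
    (hab : ∀ v, a * ‖v‖ ^ 2 ≤ ⟪T v, v⟫ ∧ ⟪T v, v⟫ ≤ b * ‖v‖ ^ 2) :
    ‖T‖ ≤ max |a| |b| := by
  rw [T.norm_eq_iSup_rayleighQuotient hT]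
  refine ciSup_le fun v => ?_
  rcases eq_or_ne v 0 with rfl | hv
  · simp
  have hv2 : 0 < ‖v‖ ^ 2 := by positivity
  obtain ⟨ha, hb⟩ := hab v
  refine abs_le_max_abs_abs ?_ ?_ <;>
    simp only [rayleighQuotient, reApplyInnerSelf_apply, RCLike.re_to_real]
  · rwa [le_div_iff₀ hv2]
  · rwa [div_le_iff₀ hv2]

variable [CompleteSpace E]

theorem hasFDerivAt_gradient {f : E → ℝ} {u : E} (hf : DifferentiableAt ℝ (fderiv ℝ f) u) :
    HasFDerivAt (gradient f)
      ((toDual ℝ E).symm.toContinuousLinearEquiv.toContinuousLinearMap ∘L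
        fderiv ℝ (fderiv ℝ f) u) u :=
  (toDual ℝ E).symm.toContinuousLinearEquiv.toContinuousLinearMap.hasFDerivAt.comp u
    hf.hasFDerivAt

theorem inner_fderiv_gradient_apply {f : E → ℝ} {u : E}
    (hf : DifferentiableAt ℝ (fderiv ℝ f) u) (v w : E) :
    ⟪fderiv ℝ (gradient f) u v, w⟫ = fderiv ℝ (fderiv ℝ f) u v w := by
  rw [(hasFDerivAt_gradient hf).fderiv]
  exact toDual_symm_apply

theorem ContDiffAt.differentiableAt_gradient {f : E → ℝ} {u : E} (hf : ContDiffAt ℝ 2 f u) :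
    DifferentiableAt ℝ (gradient f) u :=
  (hasFDerivAt_gradient ((hf.fderiv_right (m := 1) le_rfl).differentiableAt one_ne_zero))
    |>.differentiableAt

theorem ContDiffAt.isSymmetric_fderiv_gradient {f : E → ℝ} {u : E} (hf : ContDiffAt ℝ 2 f u) :
    (fderiv ℝ (gradient f) u : E →ₗ[ℝ] E).IsSymmetric := fun v w => by
  have hf' : DifferentiableAt ℝ (fderiv ℝ f) u :=
    (hf.fderiv_right (m := 1) le_rfl).differentiableAt one_ne_zero
  rw [ContinuousLinearMap.coe_coe, real_inner_comm _ v, inner_fderiv_gradient_apply hf',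
    inner_fderiv_gradient_apply hf', hf.isSymmSndFDerivAt (by simp) v w]

theorem norm_gradient_step_sub_le {f : E → ℝ} (hf : ContDiff ℝ 2 f) {ξ L κ α : ℝ} (hα : 0 ≤ α)
    (hbound : ∀ u v : E,
      ξ * ‖v‖ ^ 2 ≤ ⟪fderiv ℝ (gradient f) u v, v⟫ ∧ ⟪fderiv ℝ (gradient f) u v, v⟫ ≤ L * ‖v‖ ^ 2)
    (x y : E) :
    ‖(κ • x - α • gradient f x) - (κ • y - α • gradient f y)‖ ≤
      max |κ - α * ξ| |κ - α * L| * ‖x - y‖ := by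
  set A : E → E →L[ℝ] E := fun u => κ • ContinuousLinearMap.id ℝ E - α • fderiv ℝ (gradient f) u
  have hA (u : E) : HasFDerivAt (fun x => κ • x - α • gradient f x) (A u) u :=
    ((hasFDerivAt_id u).const_smul κ).sub
      (hf.contDiffAt.differentiableAt_gradient.hasFDerivAt.const_smul α)
  have hA_inner (u v : E) : ⟪A u v, v⟫ = κ * ‖v‖ ^ 2 - α * ⟪fderiv ℝ (gradient f) u v, v⟫ := by
    simp [A, inner_sub_left, real_inner_smul_left]
  have hA_norm (u : E) : ‖A u‖ ≤ max |κ - α * ξ| |κ - α * L| := by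
    rw [max_comm]
    refine ContinuousLinearMap.norm_le_max_abs_of_inner_self_mem ?_ fun v => ?_
    · simpa [A] using (LinearMap.IsSymmetric.id.smul (conj_trivial κ)).sub
        (hf.contDiffAt.isSymmetric_fderiv_gradient.smul (conj_trivial α))
    · obtain ⟨hξ, hL⟩ := hbound u v
      rw [hA_inner]
      constructor <;> nlinarith [mul_le_mul_of_nonneg_left hξ hα, mul_le_mul_of_nonneg_left hL hα]
  simpa using convex_univ.norm_image_sub_le_of_norm_fderiv_le
    (fun u _ => (hA u).differentiableAt) (fun u _ => (hA u).fderiv ▸ hA_norm u)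
    (Set.mem_univ y) (Set.mem_univ x)

end Hessian

section Iteration

variable {ι E : Type*} [Fintype ι] [NormedAddCommGroup E] [NormedSpace ℝ E]

theorem norm_sum_smul_le_of_stochastic {p : ι → ℝ} (hp : ∀ j, 0 ≤ p j) (hp1 : ∑ j, p j = 1)
    {x : ι → E} {B : ℝ} (hx : ∀ j, ‖x j‖ ≤ B) : ‖∑ j, p j • x j‖ ≤ B :=
  mem_closedBall_zero_iff.1 <| (convex_closedBall (0 : E) B).sum_mem (fun j _ => hp j) hp1
    fun j _ => mem_closedBall_zero_iff.2 (hx j)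

theorem norm_mgd_step_sub_le {m : ι → ι → ℝ} (hm : ∀ i j, 0 ≤ m i j)
    (hrow : ∀ i, ∑ j, m i j = 1) {α σ γ e W G : ℝ} (hα : 0 ≤ α) (hσ : 0 ≤ σ) (hγ : 0 ≤ γ)
    {g : ι → E → E}
    (hg : ∀ i x y, ‖((1 - α * σ) • x - α • g i x) - ((1 - α * σ) • y - α • g i y)‖ ≤
      γ * ‖x - y‖)
    {w w' ws : ι → E}
    (hw' : ∀ i, w' i = (1 - α * σ) • w i + (α * σ) • (∑ j, m i j • w j) - α • g i (w i))
    (he : ∀ j, ‖w j - ws j‖ ≤ e) (hW : ∀ j, ‖ws j‖ ≤ W) (hG : ∀ j, ‖g j (ws j)‖ ≤ G) (i : ι) :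
    ‖w' i - ws i‖ ≤ (γ + α * σ) * e + (2 * α * σ * W + α * G) := by
  have hασ : 0 ≤ α * σ := mul_nonneg hα hσ
  have hsplit : w' i - ws i =
      (((1 - α * σ) • w i - α • g i (w i)) - ((1 - α * σ) • ws i - α • g i (ws i))) +
      (α * σ) • (∑ j, m i j • (w j - ws j)) +
      (α * σ) • (∑ j, m i j • ws j - ws i) - α • g i (ws i) := by
    simp only [smul_sub, sum_sub_distrib, hw']
    module
  have hstep := (hg i (w i) (ws i)).trans (mul_le_mul_of_nonneg_left (he i) hγ)
  have havg := norm_sum_smul_le_of_stochastic (hm i) (hrow i) he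
  have hcons : ‖∑ j, m i j • ws j - ws i‖ ≤ W + W :=
    (norm_sub_le _ _).trans (add_le_add (norm_sum_smul_le_of_stochastic (hm i) (hrow i) hW) (hW i))
  rw [hsplit]
  refine (norm_sub_le _ _).trans ((add_le_add (norm_add₃_le) le_rfl).trans ?_)
  rw [norm_smul, norm_smul, norm_smul, Real.norm_of_nonneg hασ, Real.norm_of_nonneg hα]
  linarith [mul_le_mul_of_nonneg_left havg hασ, mul_le_mul_of_nonneg_left hcons hασ,
    mul_le_mul_of_nonneg_left (hG i) hα]

end Iteration

theorem limsup_le_div_of_le_mul_add {e : ℕ → ℝ} {ρ C : ℝ}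
    (hbdd : IsCoboundedUnder (· ≤ ·) atTop e) (hρ0 : 0 ≤ ρ) (hρ1 : ρ < 1)
    (hrec : ∀ t, e (t + 1) ≤ ρ * e t + C) : limsup e atTop ≤ C / (1 - ρ) := by
  set K := C / (1 - ρ)
  have hK : ρ * K + C = K := by
    simp only [K]
    field_simp [(sub_pos.2 hρ1).ne']
    ring
  have hbound (t : ℕ) : e t ≤ ρ ^ t * (e 0 - K) + K := by
    induction t with
    | zero => simp
    | succ t ih =>
      calc e (t + 1) ≤ ρ * e t + C := hrec t
        _ ≤ ρ * (ρ ^ t * (e 0 - K) + K) + C := by gcongr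
        _ = ρ ^ (t + 1) * (e 0 - K) + K := by linear_combination hK
  have hlim : Tendsto (fun t => ρ ^ t * (e 0 - K) + K) atTop (nhds K) := by
    simpa using ((tendsto_pow_atTop_nhds_zero_of_lt_one hρ0 hρ1).mul_const (e 0 - K)).add_const K
  exact (limsup_le_limsup (Eventually.of_forall hbound) hbdd hlim.isBoundedUnder_le).trans
    hlim.limsup_eq.le

theorem max_abs_one_sub_lt {c p q : ℝ} (hp : 0 < p) (hpq : p ≤ q) (hq : q + 2 * c < 2) :
    max |1 - c - p| |1 - c - q| < 1 - c := by
  rw [max_lt_iff, abs_lt, abs_lt]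
  refine ⟨⟨?_, ?_⟩, ?_, ?_⟩ <;> linarith

theorem stmt15_general {d T : ℕ}
    (f : Fin T → EuclideanSpace ℝ (Fin d) → ℝ)
    (hC2 : ∀ i, ContDiff ℝ 2 (f i))
    (ξ L : Fin T → ℝ) (hξ : ∀ i, 0 < ξ i) (hξL : ∀ i, ξ i ≤ L i)
    (hbound : ∀ (i : Fin T) (u v : EuclideanSpace ℝ (Fin d)),
      ξ i * ‖v‖ ^ 2 ≤ ⟪(fderiv ℝ (gradient (f i)) u) v, v⟫ ∧
      ⟪(fderiv ℝ (gradient (f i)) u) v, v⟫ ≤ L i * ‖v‖ ^ 2)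
    (wstar : Fin T → EuclideanSpace ℝ (Fin d))
    (m : ℕ → Fin T → Fin T → ℝ)
    (hm : ∀ t i j, 0 ≤ m t i j) (hrow : ∀ t i, ∑ j, m t i j = 1)
    (σ α : ℝ) (hσ : 0 < σ) (hα0 : 0 < α)
    (hne : Finset.univ.Nonempty (α := Fin T))
    (hα : α < 2 / (2 * σ + Finset.univ.sup' hne L))
    (w : ℕ → Fin T → EuclideanSpace ℝ (Fin d))
    (hiter : ∀ t i, w (t + 1) i =
      (1 - α * σ) • w t i + (α * σ) • (∑ j, m t i j • w t j) -
        α • gradient (f i) (w t i)) :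
    Filter.limsup (fun t => Finset.univ.sup' hne fun i => ‖w t i - wstar i‖)
        Filter.atTop ≤
      (2 * α * σ * (Finset.univ.sup' hne fun i => ‖wstar i‖) +
          α * (Finset.univ.sup' hne fun i => ‖gradient (f i) (wstar i)‖)) /
        (1 - ((Finset.univ.sup' hne fun i =>
            max |1 - α * σ - α * ξ i| |1 - α * σ - α * L i|) + α * σ)) := by
  obtain ⟨i₀, -⟩ := id hne
  set g : Fin T → ℝ := fun i => max |1 - α * σ - α * ξ i| |1 - α * σ - α * L i|
  have hg : univ.sup' hne g < 1 - α * σ := by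
    have hL : 0 < 2 * σ + univ.sup' hne L := by
      linarith [hξ i₀, hξL i₀, le_sup' L (mem_univ i₀)]
    have hαL := (lt_div_iff₀ hL).1 hα
    refine (sup'_lt_iff hne).2 fun i _ => max_abs_one_sub_lt (mul_pos hα0 (hξ i))
      (mul_le_mul_of_nonneg_left (hξL i) hα0.le) ?_
    nlinarith [le_sup' L (mem_univ i)]
  have hg0 : 0 ≤ univ.sup' hne g :=
    le_sup'_of_le g (mem_univ i₀) ((abs_nonneg _).trans (le_max_left _ _))
  have hstep (i : Fin T) (x y : EuclideanSpace ℝ (Fin d)) :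
      ‖((1 - α * σ) • x - α • gradient (f i) x) - ((1 - α * σ) • y - α • gradient (f i) y)‖ ≤
        univ.sup' hne g * ‖x - y‖ :=
    (norm_gradient_step_sub_le (hC2 i) hα0.le (hbound i) x y).trans <|
      mul_le_mul_of_nonneg_right (le_sup' g (mem_univ i)) (norm_nonneg _)
  refine limsup_le_div_of_le_mul_add (isCoboundedUnder_le_of_le atTop fun t =>
      le_sup'_of_le _ (mem_univ i₀) (norm_nonneg _))
    (add_nonneg hg0 (mul_pos hα0 hσ).le) (by linarith) fun t => ?_
  exact sup'_le _ _ fun i _ => norm_mgd_step_sub_le (hm t) (hrow t) hα0.le hσ.le hg0 hstep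
    (hiter t) (fun j => le_sup' (fun j => ‖w t j - wstar j‖) (mem_univ j))
    (fun j => le_sup' (fun j => ‖wstar j‖) (mem_univ j))
    (fun j => le_sup' (fun j => ‖gradient (f j) (wstar j)‖) (mem_univ j)) i

/-- main MGD convergence theorem: with `f_i` C² satisfying
`ξ_i I ≤ ∇²f_i ≤ L_i I`, time-varying row-stochastic transfer matrices `m t`,
`σ > 0` and step size `0 < α < 2/(2σ + L̄)` with `L̄ = max_i L_i`, the MGD iterates
`w_i^{t+1} = (1-ασ)w_i^t + ασ Σ_j m̄_{ij}^t w_j^t - α∇f_i(w_i^t)` satisfy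
`limsup_t max_i ‖w_i^t - w_i*‖
  ≤ (2ασ max_i ‖w_i*‖ + α max_i ‖∇f_i(w_i*)‖)/(1 - (γ̄ + ασ))`
where `γ̄ = max_i max{|1-ασ-αξ_i|, |1-ασ-αL_i|}`. -/
theorem stmt15 {d T : ℕ} (hT : 0 < T)
    (f : Fin T → EuclideanSpace ℝ (Fin d) → ℝ)
    (hC2 : ∀ i, ContDiff ℝ 2 (f i))
    (ξ L : Fin T → ℝ) (hξ : ∀ i, 0 < ξ i) (hξL : ∀ i, ξ i ≤ L i)
    (hbound : ∀ (i : Fin T) (u v : EuclideanSpace ℝ (Fin d)),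
      ξ i * ‖v‖ ^ 2 ≤ ⟪(fderiv ℝ (gradient (f i)) u) v, v⟫ ∧
      ⟪(fderiv ℝ (gradient (f i)) u) v, v⟫ ≤ L i * ‖v‖ ^ 2)
    (wstar : Fin T → EuclideanSpace ℝ (Fin d))
    (m : ℕ → Fin T → Fin T → ℝ)
    (hm : ∀ t i j, 0 ≤ m t i j) (hrow : ∀ t i, ∑ j, m t i j = 1)
    (σ α : ℝ) (hσ : 0 < σ) (hα0 : 0 < α)
    (hne : Finset.univ.Nonempty (α := Fin T))
    (hα : α < 2 / (2 * σ + Finset.univ.sup' hne L))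
    (w : ℕ → Fin T → EuclideanSpace ℝ (Fin d))
    (hiter : ∀ t i, w (t + 1) i =
      (1 - α * σ) • w t i + (α * σ) • (∑ j, m t i j • w t j) -
        α • gradient (f i) (w t i)) :
    Filter.limsup (fun t => Finset.univ.sup' hne fun i => ‖w t i - wstar i‖)
        Filter.atTop ≤
      (2 * α * σ * (Finset.univ.sup' hne fun i => ‖wstar i‖) +
          α * (Finset.univ.sup' hne fun i => ‖gradient (f i) (wstar i)‖)) /
        (1 - ((Finset.univ.sup' hne fun i =>
            max |1 - α * σ - α * ξ i| |1 - α * σ - α * L i|) + α * σ)) :=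
  stmt15_general f hC2 ξ L hξ hξL hbound wstar m hm hrow σ α hσ hα0 hne hα w hiter
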